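/- In the structural causal model with exogenous independent variables U_Z, U_X, U_Y and equations Z = f_Z(U_Z), X = f_X(Z, U_X), Y = f_Y(X, Z, U_Y), the post-intervention distribution of Y under do(X = x₀) satisfies the backdoor adjustment formula: P(Y = y | do(X = x₀)) = Σ_z P(Y = y | X = x₀, Z = z) · P(Z = z), whenever P(X = x₀, Z = z) > 0 for all z in the support of Z. -/
import Mathlib


open scoped Classical

/-- Probability of event `E` under weight function `p` on a finite sample space. -/
noncomputable def Pr {Ω : Type*} [Fintype Ω] (p : Ω → ℝ) (E : Ω → Prop) : ℝ :=
  ∑ ω : Ω, if E ω then p ω else 0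

/-- Conditional probability of `E` given `F`. -/
noncomputable def cPr {Ω : Type*} [Fintype Ω] (p : Ω → ℝ) (E F : Ω → Prop) : ℝ :=
  Pr p (fun ω => E ω ∧ F ω) / Pr p F

section Aux

variable {Ω : Type*} [Fintype Ω]

lemma Pr_congr (p : Ω → ℝ) {E F : Ω → Prop} (h : ∀ ω, E ω ↔ F ω) :
    Pr p E = Pr p F := by
  unfold Pr
  exact Finset.sum_congr rfl fun ω _ => by simp [h ω]

lemma Pr_nonneg (p : Ω → ℝ) (hp : ∀ ω, 0 ≤ p ω) (E : Ω → Prop) : 0 ≤ Pr p E := by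
  unfold Pr
  refine Finset.sum_nonneg fun ω _ => ?_
  split_ifs
  · exact hp ω
  · exact le_rfl

lemma Pr_true (p : Ω → ℝ) (hsum : ∑ ω, p ω = 1) : Pr p (fun _ => True) = 1 := by
  simpa [Pr] using hsum

lemma Pr_fiber {α : Type*} [DecidableEq α] (p : Ω → ℝ) (f : Ω → α) (P : α → Prop)
    [DecidablePred P] :
    Pr p (fun ω => P (f ω))
      = ∑ a ∈ Finset.image f Finset.univ,
          if P a then Pr p (fun ω => f ω = a) else 0 := by
  have h1 : ∀ a : α, (if P a then Pr p (fun ω => f ω = a) else 0)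
      = ∑ ω : Ω, if P a ∧ f ω = a then p ω else 0 := by
    intro a
    simp only [Pr]
    split_ifs with h
    · exact Finset.sum_congr rfl fun ω _ => by simp [h]
    · exact (Finset.sum_eq_zero fun ω _ => by simp [h]).symm
  calc Pr p (fun ω => P (f ω))
      = ∑ ω : Ω, ∑ a ∈ Finset.image f Finset.univ,
          if P a ∧ f ω = a then p ω else 0 := by
        simp only [Pr]
        refine Finset.sum_congr rfl fun ω _ => ?_
        rw [Finset.sum_eq_single (f ω)]
        · simp
        · intro b _ hb
          have hne : f ω ≠ b := fun h => hb h.symm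
          simp [hne]
        · intro h
          exact absurd (Finset.mem_image_of_mem f (Finset.mem_univ ω)) h
    _ = ∑ a ∈ Finset.image f Finset.univ, ∑ ω : Ω,
          if P a ∧ f ω = a then p ω else 0 := Finset.sum_comm
    _ = ∑ a ∈ Finset.image f Finset.univ,
          if P a then Pr p (fun ω => f ω = a) else 0 :=
        Finset.sum_congr rfl fun a _ => (h1 a).symm

lemma Pr_partition {𝒵 : Type*} [Fintype 𝒵] (p : Ω → ℝ) (Z : Ω → 𝒵) (E : Ω → Prop) :
    Pr p E = ∑ z : 𝒵, Pr p (fun ω => Z ω = z ∧ E ω) := by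
  unfold Pr
  rw [Finset.sum_comm]
  refine Finset.sum_congr rfl fun ω _ => ?_
  rw [Finset.sum_eq_single (Z ω)]
  · simp
  · intro b _ hb
    have hne : Z ω ≠ b := fun h => hb h.symm
    simp [hne]
  · intro h; exact absurd (Finset.mem_univ (Z ω)) h

lemma indep3 {𝒰Z 𝒰X 𝒰Y : Type*} (p : Ω → ℝ)
    (UZ : Ω → 𝒰Z) (UX : Ω → 𝒰X) (UY : Ω → 𝒰Y)
    (hindep : ∀ (a : 𝒰Z) (b : 𝒰X) (c : 𝒰Y),
      Pr p (fun ω => UZ ω = a ∧ UX ω = b ∧ UY ω = c)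
        = Pr p (fun ω => UZ ω = a) * Pr p (fun ω => UX ω = b) * Pr p (fun ω => UY ω = c))
    (P : 𝒰Z → Prop) (Q : 𝒰X → Prop) (R : 𝒰Y → Prop) :
    Pr p (fun ω => P (UZ ω) ∧ Q (UX ω) ∧ R (UY ω))
      = Pr p (fun ω => P (UZ ω)) * Pr p (fun ω => Q (UX ω)) * Pr p (fun ω => R (UY ω)) := by
  classical
  set SZ := Finset.image UZ Finset.univ with hSZ
  set SX := Finset.image UX Finset.univ with hSX
  set SY := Finset.image UY Finset.univ with hSY
  set f : Ω → 𝒰Z × 𝒰X × 𝒰Y := fun ω => (UZ ω, UX ω, UY ω) with hf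
  have hsubset : Finset.image f Finset.univ ⊆ SZ ×ˢ SX ×ˢ SY := by
    intro t ht
    rcases Finset.mem_image.mp ht with ⟨ω, _, rfl⟩
    simp [hSZ, hSX, hSY, Finset.mem_product, hf]
  calc Pr p (fun ω => P (UZ ω) ∧ Q (UX ω) ∧ R (UY ω))
      = ∑ t ∈ Finset.image f Finset.univ,
          if P t.1 ∧ Q t.2.1 ∧ R t.2.2 then Pr p (fun ω => f ω = t) else 0 :=
        Pr_fiber p f (fun t => P t.1 ∧ Q t.2.1 ∧ R t.2.2)
    _ = ∑ t ∈ SZ ×ˢ SX ×ˢ SY,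
          if P t.1 ∧ Q t.2.1 ∧ R t.2.2 then Pr p (fun ω => f ω = t) else 0 := by
        refine Finset.sum_subset hsubset ?_
        intro t _ ht
        have h0 : Pr p (fun ω => f ω = t) = 0 := by
          unfold Pr
          refine Finset.sum_eq_zero fun ω _ => ?_
          have hne : f ω ≠ t :=
            fun h => ht (h ▸ Finset.mem_image_of_mem f (Finset.mem_univ ω))
          simp [hne]
        simp [h0]
    _ = ∑ a ∈ SZ, ∑ b ∈ SX, ∑ c ∈ SY,
          if P a ∧ Q b ∧ R c then Pr p (fun ω => f ω = (a, b, c)) else 0 := by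
        rw [Finset.sum_product]
        refine Finset.sum_congr rfl fun a _ => ?_
        rw [Finset.sum_product]
    _ = ∑ a ∈ SZ, ∑ b ∈ SX, ∑ c ∈ SY,
          (if P a then Pr p (fun ω => UZ ω = a) else 0) *
            ((if Q b then Pr p (fun ω => UX ω = b) else 0) *
              (if R c then Pr p (fun ω => UY ω = c) else 0)) := by
        refine Finset.sum_congr rfl fun a _ => Finset.sum_congr rfl fun b _ =>
          Finset.sum_congr rfl fun c _ => ?_
        have hprod : Pr p (fun ω => f ω = (a, b, c))
            = Pr p (fun ω => UZ ω = a ∧ UX ω = b ∧ UY ω = c) := by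
          apply Pr_congr
          intro ω
          simp [hf, Prod.ext_iff]
        by_cases hPa : P a <;> by_cases hQb : Q b <;> by_cases hRc : R c <;>
          simp [hPa, hQb, hRc, hprod, hindep a b c, mul_assoc]
    _ = (∑ a ∈ SZ, if P a then Pr p (fun ω => UZ ω = a) else 0) *
          ((∑ b ∈ SX, if Q b then Pr p (fun ω => UX ω = b) else 0) *
            (∑ c ∈ SY, if R c then Pr p (fun ω => UY ω = c) else 0)) := by
        rw [Finset.sum_mul_sum, Finset.sum_mul_sum]
        refine Finset.sum_congr rfl fun a _ => Finset.sum_congr rfl fun b _ => ?_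
        rw [Finset.mul_sum]
    _ = Pr p (fun ω => P (UZ ω)) * (Pr p (fun ω => Q (UX ω)) * Pr p (fun ω => R (UY ω))) := by
        rw [← Pr_fiber p UZ P, ← Pr_fiber p UX Q, ← Pr_fiber p UY R]
    _ = Pr p (fun ω => P (UZ ω)) * Pr p (fun ω => Q (UX ω)) * Pr p (fun ω => R (UY ω)) := by
        rw [mul_assoc]

end Aux

/-- Backdoor adjustment in the chain SCM Z = f_Z(U_Z), X = f_X(Z,U_X), Y = f_Y(X,Z,U_Y). -/
theorem backdoor_adjustment_chain
    {Ω 𝒰Z 𝒰X 𝒰Y 𝒵 𝒳 𝒴 : Type*} [Fintype Ω] [Fintype 𝒵]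
    (p : Ω → ℝ) (hp : ∀ ω, 0 ≤ p ω) (hsum : ∑ ω, p ω = 1)
    (UZ : Ω → 𝒰Z) (UX : Ω → 𝒰X) (UY : Ω → 𝒰Y)
    (hindep : ∀ (a : 𝒰Z) (b : 𝒰X) (c : 𝒰Y),
      Pr p (fun ω => UZ ω = a ∧ UX ω = b ∧ UY ω = c)
        = Pr p (fun ω => UZ ω = a) * Pr p (fun ω => UX ω = b) * Pr p (fun ω => UY ω = c))
    (fZ : 𝒰Z → 𝒵) (fX : 𝒵 → 𝒰X → 𝒳) (fY : 𝒳 → 𝒵 → 𝒰Y → 𝒴)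
    (Z : Ω → 𝒵) (X : Ω → 𝒳) (Y : Ω → 𝒴)
    (hZ : ∀ ω, Z ω = fZ (UZ ω))
    (hX : ∀ ω, X ω = fX (Z ω) (UX ω))
    (hY : ∀ ω, Y ω = fY (X ω) (Z ω) (UY ω))
    (x₀ : 𝒳) (y : 𝒴)
    (hpos : ∀ z : 𝒵, 0 < Pr p (fun ω => Z ω = z) →
      0 < Pr p (fun ω => X ω = x₀ ∧ Z ω = z)) :
    Pr p (fun ω => fY x₀ (Z ω) (UY ω) = y)
      = ∑ z : 𝒵, cPr p (fun ω => Y ω = y) (fun ω => X ω = x₀ ∧ Z ω = z)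
          * Pr p (fun ω => Z ω = z) := by
  classical
  have hPrT : Pr p (fun _ : Ω => True) = 1 := Pr_true p hsum
  have hZz : ∀ z, Pr p (fun ω => fZ (UZ ω) = z) = Pr p (fun ω => Z ω = z) :=
    fun z => Pr_congr p fun ω => by rw [hZ ω]
  -- LHS as a sum over z
  have lhs_eq : Pr p (fun ω => fY x₀ (Z ω) (UY ω) = y)
      = ∑ z : 𝒵, Pr p (fun ω => Z ω = z) * Pr p (fun ω => fY x₀ z (UY ω) = y) := by
    rw [Pr_partition p Z (fun ω => fY x₀ (Z ω) (UY ω) = y)]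
    refine Finset.sum_congr rfl fun z _ => ?_
    have h1 : Pr p (fun ω => Z ω = z ∧ fY x₀ (Z ω) (UY ω) = y)
        = Pr p (fun ω => fZ (UZ ω) = z ∧ True ∧ fY x₀ z (UY ω) = y) := by
      apply Pr_congr
      intro ω
      rw [hZ ω]
      constructor
      · rintro ⟨h1, h2⟩
        exact ⟨h1, trivial, h1 ▸ h2⟩
      · rintro ⟨h1, -, h3⟩
        exact ⟨h1, by rw [h1]; exact h3⟩
    rw [h1, indep3 p UZ UX UY hindep (fun a => fZ a = z) (fun _ => True)
      (fun c => fY x₀ z c = y), hPrT, hZz]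
    ring
  rw [lhs_eq]
  refine Finset.sum_congr rfl fun z _ => ?_
  by_cases hz : 0 < Pr p (fun ω => Z ω = z)
  · have hd := hpos z hz
    have hnum : Pr p (fun ω => Y ω = y ∧ X ω = x₀ ∧ Z ω = z)
        = Pr p (fun ω => fZ (UZ ω) = z ∧ fX z (UX ω) = x₀ ∧ fY x₀ z (UY ω) = y) := by
      apply Pr_congr
      intro ω
      constructor
      · rintro ⟨hy', hx', hz'⟩
        refine ⟨by rw [← hZ ω]; exact hz', ?_, ?_⟩
        · rw [← hz']; rw [← hX ω]; exact hx'
        · rw [← hz', ← hx', ← hY ω]; exact hy'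
      · rintro ⟨h1, h2, h3⟩
        have hz' : Z ω = z := by rw [hZ ω]; exact h1
        have hx' : X ω = x₀ := by rw [hX ω, hz']; exact h2
        refine ⟨?_, hx', hz'⟩
        rw [hY ω, hx', hz']; exact h3
    have hden : Pr p (fun ω => X ω = x₀ ∧ Z ω = z)
        = Pr p (fun ω => fZ (UZ ω) = z ∧ fX z (UX ω) = x₀ ∧ True) := by
      apply Pr_congr
      intro ω
      constructor
      · rintro ⟨hx', hz'⟩
        refine ⟨by rw [← hZ ω]; exact hz', ?_, trivial⟩
        rw [← hz', ← hX ω]; exact hx'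
      · rintro ⟨h1, h2, -⟩
        have hz' : Z ω = z := by rw [hZ ω]; exact h1
        exact ⟨by rw [hX ω, hz']; exact h2, hz'⟩
    have hnum' : Pr p (fun ω => Y ω = y ∧ X ω = x₀ ∧ Z ω = z)
        = Pr p (fun ω => X ω = x₀ ∧ Z ω = z) * Pr p (fun ω => fY x₀ z (UY ω) = y) := by
      rw [hnum, hden,
        indep3 p UZ UX UY hindep (fun a => fZ a = z) (fun b => fX z b = x₀)
          (fun c => fY x₀ z c = y),
        indep3 p UZ UX UY hindep (fun a => fZ a = z) (fun b => fX z b = x₀)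
          (fun _ => True), hPrT]
      ring
    have hcpr : cPr p (fun ω => Y ω = y) (fun ω => X ω = x₀ ∧ Z ω = z)
        = Pr p (fun ω => fY x₀ z (UY ω) = y) := by
      unfold cPr
      have : Pr p (fun ω => Y ω = y ∧ (X ω = x₀ ∧ Z ω = z))
          = Pr p (fun ω => Y ω = y ∧ X ω = x₀ ∧ Z ω = z) := Pr_congr p fun ω => by tauto
      rw [this, hnum', mul_comm, mul_div_assoc, div_self (ne_of_gt hd), mul_one]
    rw [hcpr]
    ring
  · have hz0 : Pr p (fun ω => Z ω = z) = 0 :=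
      le_antisymm (not_lt.mp hz) (Pr_nonneg p hp _)
    rw [hz0]
    ring
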